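/- arXiv:2302.05828 — 2 statements merged into one kernel-verified Lean document; each statement's English description precedes it below -/
import Mathlib

section
/- The function f(ρ) = (1/π)(sin(arccos ρ) + (π − arccos ρ)·ρ) has a unique fixed point on [−1, 1], namely ρ = 1. -/
/-- The ReLU arc-cosine correlation mapping. -/
noncomputable def arcCosCorr (ρ : ℝ) : ℝ :=
  (1 / Real.pi) * (Real.sin (Real.arccos ρ) + (Real.pi - Real.arccos ρ) * ρ)

/-!
Writing `ρ = cos θ` with `θ = arccos ρ ∈ [0, π]`, the fixed-point equation `f ρ = ρ` becomes
`sin θ = θ cos θ`. But `θ cos θ < sin θ` on `(0, π]` (this is `θ < tan θ` below `π / 2`, and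
beyond it `cos θ ≤ 0 ≤ sin θ`), so `θ = 0`, i.e. `ρ = 1`.
-/

open Real

theorem Real.mul_cos_lt_sin {θ : ℝ} (h0 : 0 < θ) (hπ : θ ≤ π) : θ * cos θ < sin θ := by
  rcases lt_or_ge θ (π / 2) with hθ | hθ
  · have hcos : 0 < cos θ := cos_pos_of_mem_Ioo ⟨by linarith [pi_pos], hθ⟩
    have htan := lt_tan h0 hθ
    rwa [tan_eq_sin_div_cos, lt_div_iff₀ hcos] at htan
  · have hcos : cos θ ≤ 0 := cos_nonpos_of_pi_div_two_le_of_le hθ (by linarith)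
    have hsin : 0 ≤ sin θ := sin_nonneg_of_nonneg_of_le_pi h0.le hπ
    by_contra! hle
    have hsin0 : sin θ = 0 := by nlinarith
    have hcos0 : cos θ = 0 := by nlinarith
    simpa [hsin0, hcos0] using sin_sq_add_cos_sq θ

theorem arcCosCorr_one : arcCosCorr 1 = 1 := by
  simp [arcCosCorr, arccos_one]

theorem arcCosCorr_eq_self_iff (ρ : ℝ) :
    arcCosCorr ρ = ρ ↔ sin (arccos ρ) = arccos ρ * ρ := by
  rw [arcCosCorr, one_div_mul_eq_div, div_eq_iff pi_ne_zero]
  constructor <;> intro h <;> linarith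

/-- `f` has a unique fixed point on `[-1,1]`, namely `ρ = 1`:
`ρ = 1` is a fixed point, and any fixed point in `[-1,1]` equals `1`. -/
theorem arcCosCorr_unique_fixedPoint :
    arcCosCorr 1 = 1 ∧ ∀ ρ ∈ Set.Icc (-1 : ℝ) 1, arcCosCorr ρ = ρ → ρ = 1 := by
  refine ⟨arcCosCorr_one, fun ρ ⟨hρ₁, hρ₂⟩ hfix => ?_⟩
  rw [arcCosCorr_eq_self_iff] at hfix
  rcases (arccos_nonneg ρ).lt_or_eq with hθ | hθ
  · have := mul_cos_lt_sin hθ (arccos_le_pi ρ)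
    rw [cos_arccos hρ₁ hρ₂] at this
    linarith
  · exact le_antisymm hρ₂ (arccos_eq_zero.mp hθ.symm)
end

section
/- Let K^{(l)} be the covariance recursion of an infinitely wide deep fully connected ReLU network: K^{(l+1)}(x,x') = σ_b² + (σ_w²/2)·σ_l(x)σ_l(x')·f(ρ_l(x,x')), where σ_l(x) = √(K^{(l)}(x,x)), ρ_l is the correlation, and f is the arc-cosine correlation mapping with f(ρ) ≥ ρ. If 0 < σ_w² < 2 and σ_b² > 0, then K^{(l)}(x,x') → q := σ_b²/(1 − σ_w²/2) for every pair (x,x'), i.e., K^{(l)} → q·𝟙_{N×N}. -/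
open Real Filter Topology

theorem Real.mul_cos_le_sin {θ : ℝ} (h0 : 0 ≤ θ) (hπ : θ ≤ π) : θ * cos θ ≤ sin θ := by
  rcases lt_or_ge θ (π / 2) with hθ | hθ
  · have hcos : 0 < cos θ := cos_pos_of_mem_Ioo ⟨by linarith [pi_pos], hθ⟩
    have htan := le_tan h0 hθ
    rwa [tan_eq_sin_div_cos, le_div_iff₀ hcos] at htan
  · have hcos : cos θ ≤ 0 := cos_nonpos_of_pi_div_two_le_of_le hθ (by linarith)
    nlinarith [sin_nonneg_of_nonneg_of_le_pi h0 hπ]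

theorem le_arcCosCorr (ρ : ℝ) : ρ ≤ arcCosCorr ρ := by
  rcases le_or_gt ρ (-1) with h₁ | h₁
  · rw [arcCosCorr, arccos_eq_pi.2 h₁]
    simpa using h₁.trans (by norm_num)
  rcases le_or_gt ρ 1 with h₂ | h₂
  · have key := mul_cos_le_sin (arccos_nonneg ρ) (arccos_le_pi ρ)
    rw [cos_arccos h₁.le h₂] at key
    rw [arcCosCorr, one_div_mul_eq_div, le_div_iff₀ pi_pos]
    linarith
  · rw [arcCosCorr, arccos_eq_zero.2 h₂.le]
    field_simp
    simp

theorem arcCosCorr_le_one {ρ : ℝ} (h : ρ ≤ 1) : arcCosCorr ρ ≤ 1 := by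
  rw [arcCosCorr, one_div_mul_eq_div, div_le_one pi_pos]
  nlinarith [sin_le (arccos_nonneg ρ), mul_le_mul_of_nonneg_left h (sub_nonneg.2 (arccos_le_pi ρ))]

theorem add_mul_mul_le_sqrt_mul_sqrt {b c : ℝ} (hb : 0 ≤ b) (hc : 0 ≤ c) (s t : ℝ) :
    b + c * (s * t) ≤ √(b + c * (s * s)) * √(b + c * (t * t)) := by
  rw [← sqrt_mul (add_nonneg hb (mul_nonneg hc (mul_self_nonneg s)))]
  apply le_sqrt_of_sq_le
  nlinarith [mul_nonneg (mul_nonneg hb hc) (sq_nonneg (s - t))]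

theorem tendsto_add_pow_mul {c : ℝ} (hc0 : 0 ≤ c) (hc1 : c < 1) (q d : ℝ) :
    Tendsto (fun l : ℕ => q + c ^ l * d) atTop (𝓝 q) := by
  simpa using tendsto_const_nhds.add
    ((tendsto_pow_atTop_nhds_zero_of_lt_one hc0 hc1).mul_const d)

section AffineRecursion

variable {b c q : ℝ} {u : ℕ → ℝ}

theorem eq_add_pow_mul_of_eq_add_mul (hq : b + c * q = q) (h : ∀ l, u (l + 1) = b + c * u l)
    (l : ℕ) : u l = q + c ^ l * (u 0 - q) := by
  induction l with
  | zero => simp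
  | succ l ih => rw [h, ih]; linear_combination hq

theorem add_pow_mul_le_of_add_mul_le (hc : 0 ≤ c) (hq : b + c * q = q)
    (h : ∀ l, b + c * u l ≤ u (l + 1)) (l : ℕ) : q + c ^ l * (u 0 - q) ≤ u l := by
  induction l with
  | zero => simp
  | succ l ih =>
    calc q + c ^ (l + 1) * (u 0 - q) = b + c * (q + c ^ l * (u 0 - q)) := by
          linear_combination -hq
      _ ≤ b + c * u l := by gcongr
      _ ≤ u (l + 1) := h l

end AffineRecursion

section CovarianceRecursion

variable {n : Type*} {b c : ℝ} {f : ℝ → ℝ} {A : Matrix n n ℝ}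

/-- One layer of the covariance recursion, with `b = σ_b²` and `c = σ_w²/2`. -/
noncomputable def covStep (b c : ℝ) (f : ℝ → ℝ) (A : Matrix n n ℝ) : Matrix n n ℝ :=
  Matrix.of fun x y => b + c * √(A x x) * √(A y y) * f (A x y / (√(A x x) * √(A y y)))

/-- The consequences of positive semidefiniteness that survive the recursion. -/
structure IsDiagBounded (A : Matrix n n ℝ) : Prop where
  diag_nonneg : ∀ x, 0 ≤ A x x
  le_sqrt_mul_sqrt : ∀ x y, A x y ≤ √(A x x) * √(A y y)

theorem Matrix.PosSemidef.isDiagBounded [Fintype n] (hA : A.PosSemidef) : IsDiagBounded A := by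
  refine ⟨fun x => hA.diag_nonneg, fun x y => ?_⟩
  have hdet := (hA.submatrix ![x, y]).det_nonneg
  have hsymm : A y x = A x y := by simpa using hA.1.apply x y
  rw [Matrix.det_fin_two] at hdet
  simp only [Matrix.submatrix_apply, Matrix.cons_val_zero, Matrix.cons_val_one, hsymm] at hdet
  rw [← sqrt_mul hA.diag_nonneg]
  exact (le_abs_self _).trans (abs_le_sqrt (by nlinarith))

theorem covStep_apply_self (hf : f 1 = 1) {x : n} (h : 0 ≤ A x x) :
    covStep b c f A x x = b + c * A x x := by
  rcases h.eq_or_lt with h0 | h0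
  · simp [covStep, ← h0]
  · rw [covStep, Matrix.of_apply, mul_self_sqrt h, div_self h0.ne', hf, mul_one, mul_assoc,
      mul_self_sqrt h]

theorem isDiagBounded_covStep (hb : 0 ≤ b) (hc : 0 ≤ c) (hf1 : f 1 = 1)
    (hf_le : ∀ ρ ≤ 1, f ρ ≤ 1) (hA : IsDiagBounded A) : IsDiagBounded (covStep b c f A) := by
  have hdiag : ∀ x, covStep b c f A x x = b + c * (√(A x x) * √(A x x)) := fun x => by
    rw [mul_self_sqrt (hA.diag_nonneg x), covStep_apply_self hf1 (hA.diag_nonneg x)]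
  refine ⟨fun x => ?_, fun x y => ?_⟩
  · rw [covStep_apply_self hf1 (hA.diag_nonneg x)]
    exact add_nonneg hb (mul_nonneg hc (hA.diag_nonneg x))
  · have hρ : A x y / (√(A x x) * √(A y y)) ≤ 1 :=
      div_le_one_of_le₀ (hA.le_sqrt_mul_sqrt x y) (by positivity)
    have hf := mul_le_of_le_one_right (by positivity : 0 ≤ c * (√(A x x) * √(A y y))) (hf_le _ hρ)
    calc covStep b c f A x y ≤ b + c * (√(A x x) * √(A y y)) := by
          rw [covStep, Matrix.of_apply]
          linarith
      _ ≤ _ := by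
          rw [hdiag, hdiag]
          exact add_mul_mul_le_sqrt_mul_sqrt hb hc _ _

theorem IsDiagBounded.add_mul_le_covStep (hc : 0 ≤ c) (hf_ge : ∀ ρ, ρ ≤ f ρ)
    (hA : IsDiagBounded A) (x y : n) : b + c * A x y ≤ covStep b c f A x y := by
  set s := √(A x x) * √(A y y)
  have key : A x y ≤ s * f (A x y / s) := by
    rcases (mul_nonneg (sqrt_nonneg (A x x)) (sqrt_nonneg (A y y))).eq_or_lt with h0 | h0
    · simpa [s, ← h0] using hA.le_sqrt_mul_sqrt x y
    · calc A x y = s * (A x y / s) := (mul_div_cancel₀ _ h0.ne').symm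
        _ ≤ s * f (A x y / s) := mul_le_mul_of_nonneg_left (hf_ge _) h0.le
  rw [covStep, Matrix.of_apply]
  nlinarith [mul_le_mul_of_nonneg_left key hc]

theorem tendsto_of_covStep_iterate (hb : 0 ≤ b) (hc0 : 0 ≤ c) (hc1 : c < 1)
    (hf_ge : ∀ ρ, ρ ≤ f ρ) (hf_le : ∀ ρ ≤ 1, f ρ ≤ 1) {K : ℕ → Matrix n n ℝ}
    (hK0 : IsDiagBounded (K 0)) (hK : ∀ l, K (l + 1) = covStep b c f (K l)) (x y : n) :
    Tendsto (fun l => K l x y) atTop (𝓝 (b / (1 - c))) := by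
  set q := b / (1 - c)
  have hq : b + c * q = q := by
    simp only [q]
    field_simp [(sub_pos.2 hc1).ne']
    ring
  have hq0 : 0 ≤ q := div_nonneg hb (sub_pos.2 hc1).le
  have hf1 : f 1 = 1 := le_antisymm (hf_le 1 le_rfl) (hf_ge 1)
  have hbound : ∀ l, IsDiagBounded (K l) := fun l => by
    induction l with
    | zero => exact hK0
    | succ l ih => rw [hK]; exact isDiagBounded_covStep hb hc0 hf1 hf_le ih
  have hdiag (z : n) : Tendsto (fun l => K l z z) atTop (𝓝 q) := by
    have hz := eq_add_pow_mul_of_eq_add_mul (u := fun l => K l z z) hq fun l => by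
      rw [hK, covStep_apply_self hf1 ((hbound l).diag_nonneg z)]
    exact (tendsto_add_pow_mul hc0 hc1 q _).congr fun l => (hz l).symm
  have hupper : Tendsto (fun l => √(K l x x) * √(K l y y)) atTop (𝓝 q) := by
    simpa only [mul_self_sqrt hq0] using (hdiag x).sqrt.mul (hdiag y).sqrt
  have hlower := add_pow_mul_le_of_add_mul_le (u := fun l => K l x y) hc0 hq fun l => by
    rw [hK]; exact (hbound l).add_mul_le_covStep hc0 hf_ge x y
  exact tendsto_of_tendsto_of_tendsto_of_le_of_le (tendsto_add_pow_mul hc0 hc1 q _) hupper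
    hlower fun l => (hbound l).le_sqrt_mul_sqrt x y

end CovarianceRecursion

/-- for the covariance recursion of an infinitely wide deep fully
connected ReLU network,
`K^{(l+1)}(x,x') = σ_b² + (σ_w²/2) σ_l(x) σ_l(x') f(ρ_l(x,x'))`,
with `0 < σ_w² < 2` and `σ_b² > 0`, every entry converges to
`q = σ_b²/(1 - σ_w²/2)`, i.e. `K^{(l)} → q 𝟙`. -/
theorem mlp_cov_tendsto_const {N : ℕ} (σb2 σw2 : ℝ)
    (hσw0 : 0 < σw2) (hσw : σw2 < 2) (hσb : 0 < σb2)
    (K : ℕ → Matrix (Fin N) (Fin N) ℝ) (hK0 : (K 0).PosSemidef)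
    (hrec : ∀ l x x', K (l + 1) x x' =
      σb2 + (σw2 / 2) * Real.sqrt (K l x x) * Real.sqrt (K l x' x') *
        arcCosCorr (K l x x' / (Real.sqrt (K l x x) * Real.sqrt (K l x' x')))) :
    ∀ x x', Filter.Tendsto (fun l => K l x x') Filter.atTop
      (nhds (σb2 / (1 - σw2 / 2))) := by
  intro x x'
  have hK (l : ℕ) : K (l + 1) = covStep σb2 (σw2 / 2) arcCosCorr (K l) := by
    ext y y'
    exact hrec l y y'
  exact tendsto_of_covStep_iterate hσb.le (by linarith) (by linarith) le_arcCosCorr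
    (fun _ => arcCosCorr_le_one) hK0.isDiagBounded hK x x'
end
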